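/- Assume k is nonincreasing on [0,∞), k(diam X) > 0, and Σ_{x ∈ X} m(x) = 1. Let i ≠ j in X, let B_n = B(i, d(i,j)) be the smallest ball containing both i and j, and let B_j⁰ = B(j, min_{z ≠ j} d(j,z)) be the smallest ball containing j with at least two elements. Then the improper integral ∫₀^∞ ( (exp(tL))_{j,j}/m(j) − (exp(tL))_{i,j}/m(j) ) dt converges and equals (−1/λ(B_j⁰))·(1/m(j)) + Σ_T (1/m(T))·( 1/λ(T) − 1/λ(T⁺) ), where the sum ranges over all balls T of X with B_j⁰ ⊆ T ⊊ B_n. (This quantity is the mean first passage time m_{ij} of the associated continuous-time Markov chain.) -/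

import Mathlib

open scoped Classical
open Finset

/-- Closed ball of radius `r` around `x`, as a finset. -/
noncomputable def uball {X : Type*} [Fintype X] (d : X → X → ℝ) (x : X) (r : ℝ) : Finset X :=
  Finset.univ.filter fun y => d x y ≤ r

/-- A ball of the ultrametric space: a closed ball of nonnegative radius. -/
def IsBall {X : Type*} [Fintype X] (d : X → X → ℝ) (B : Finset X) : Prop :=
  ∃ x r, 0 ≤ r ∧ B = uball d x r

/-- Diameter of a finite set: maximum of `d` over `B × B` (`0` if `B` is empty). -/
noncomputable def fdiam {X : Type*} [Fintype X] (d : X → X → ℝ) (B : Finset X) : ℝ :=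
  if h : (B ×ˢ B).Nonempty then (B ×ˢ B).sup' h fun p => d p.1 p.2 else 0

/-- Mass of a set: `m(B) = Σ_{x ∈ B} m(x)`. -/
noncomputable def mass {X : Type*} [Fintype X] (m : X → ℝ) (B : Finset X) : ℝ :=
  ∑ x ∈ B, m x

/-- The eigenvalue attached to a ball `B`, computed from a base point `x₀ ∈ B`:
`λ(B) = −(Σ_{y ∉ B} k(d(x₀,y))·m(y) + k(diam B)·m(B))`. -/
noncomputable def lamB {X : Type*} [Fintype X] [DecidableEq X]
    (d : X → X → ℝ) (k : ℝ → ℝ) (m : X → ℝ) (B : Finset X) (x₀ : X) : ℝ :=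
  -((∑ y ∈ Bᶜ, k (d x₀ y) * m y) + k (fdiam d B) * mass m B)

/-- The parent radius of a ball `B ⊊ X` seen from `x ∈ B`: `r⁺ = min{d(x,y) : y ∉ B}`. -/
noncomputable def parentR {X : Type*} [Fintype X] [DecidableEq X]
    (d : X → X → ℝ) (B : Finset X) (x : X) : ℝ :=
  if h : (Bᶜ : Finset X).Nonempty then Bᶜ.inf' h fun y => d x y else 0

/-- The parent ball `B⁺ = B(x, r⁺)` of `B ⊊ X`, computed from a base point `x ∈ B`. -/
noncomputable def parentB {X : Type*} [Fintype X] [DecidableEq X]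
    (d : X → X → ℝ) (B : Finset X) (x : X) : Finset X :=
  uball d x (parentR d B x)

/-- The ultrametric Laplacian matrix:
`L x y = k(d(x,y))·m(y)` off the diagonal and `L x x = −Σ_{z ≠ x} k(d(x,z))·m(z)`. -/
noncomputable def ultraLap {X : Type*} [Fintype X] [DecidableEq X]
    (d : X → X → ℝ) (k : ℝ → ℝ) (m : X → ℝ) : Matrix X X ℝ :=
  fun x y => if y = x then -(∑ z ∈ ({x}ᶜ : Finset X), k (d x z) * m z) else k (d x y) * m y

/-- The smallest ball containing `x` and `y` and having at least two elements:
`B(x, d(x,y))` for `x ≠ y`, and `B(x, min_{z ≠ x} d(x,z))` for `x = y`. -/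
noncomputable def sball {X : Type*} [Fintype X] [DecidableEq X]
    (d : X → X → ℝ) (x y : X) : Finset X :=
  if x = y then
    (if h : (({x}ᶜ : Finset X)).Nonempty then
      uball d x ((({x}ᶜ : Finset X)).inf' h fun z => d x z)
     else uball d x 0)
  else uball d x (d x y)

/-!
Let `r⁺` denote the next distance from `j` after `r`. The difference of the `m`-normalised
indicators of the balls `B(j, r)` and `B(j, r⁺)` is an eigenvector of `L` with eigenvalue
`λ(B(j, r⁺))`, and these differences telescope, up to a constant vector, to `δ_j / m(j)`.
Hence `exp(tL)_{xj} / m(j)` is a constant plus a finite sum of decaying exponentials, so the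
integral is a finite sum of `-1/λ` times the coefficient differences at `j` and `i`; a summation
by parts along the chain of balls around `j` turns it into the sum over `B_j⁰ ⊆ T ⊊ B_n`.
-/

open MeasureTheory

section SuccIn

variable {α : Type*} [LinearOrder α] {S : Finset α} {r s : α}

/-- Junk value `r` when no element of `S` exceeds `r`. -/
noncomputable def succIn (S : Finset α) (r : α) : α :=
  if h : (S.filter (r < ·)).Nonempty then (S.filter (r < ·)).min' h else r

lemma succIn_mem_and_lt (h : ∃ s ∈ S, r < s) : succIn S r ∈ S ∧ r < succIn S r := by
  obtain ⟨s, hs, hrs⟩ := h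
  have hne : (S.filter (r < ·)).Nonempty := ⟨s, mem_filter.2 ⟨hs, hrs⟩⟩
  rw [succIn, dif_pos hne]
  exact mem_filter.1 (min'_mem _ hne)

lemma succIn_mem (h : ∃ s ∈ S, r < s) : succIn S r ∈ S := (succIn_mem_and_lt h).1

lemma lt_succIn (h : ∃ s ∈ S, r < s) : r < succIn S r := (succIn_mem_and_lt h).2

lemma succIn_le (hs : s ∈ S) (hrs : r < s) : succIn S r ≤ s := by
  have hne : (S.filter (r < ·)).Nonempty := ⟨s, mem_filter.2 ⟨hs, hrs⟩⟩
  rw [succIn, dif_pos hne]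
  exact min'_le _ _ (mem_filter.2 ⟨hs, hrs⟩)

lemma succIn_of_forall_le (h : ∀ s ∈ S, s ≤ r) : succIn S r = r := by
  rw [succIn, dif_neg]
  rintro ⟨s, hs⟩
  exact (h s (mem_filter.1 hs).1).not_gt (mem_filter.1 hs).2

lemma exists_gt_of_mem_erase_max' {hS : S.Nonempty} (hr : r ∈ S.erase (S.max' hS)) :
    ∃ s ∈ S, r < s :=
  ⟨_, max'_mem S hS, (le_max' S r (mem_of_mem_erase hr)).lt_of_ne (ne_of_mem_erase hr)⟩

lemma sum_erase_max'_succIn {M : Type*} [AddCommMonoid M] (hS : S.Nonempty) (g : α → M) :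
    ∑ r ∈ S.erase (S.max' hS), g (succIn S r) = ∑ s ∈ S.erase (S.min' hS), g s := by
  have hmono : StrictMonoOn (succIn S) (S.erase (S.max' hS) : Set α) := fun a _ b hb hab =>
    (succIn_le (mem_of_mem_erase hb) hab).trans_lt (lt_succIn (exists_gt_of_mem_erase_max' hb))
  refine sum_nbij (succIn S) (fun r hr => ?_) hmono.injOn (fun s hs => ?_) fun _ _ => rfl
  · have hgt := exists_gt_of_mem_erase_max' hr
    exact mem_erase.2 ⟨((min'_le S r (mem_of_mem_erase hr)).trans_lt (lt_succIn hgt)).ne',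
      succIn_mem hgt⟩
  · obtain ⟨hs0, hs⟩ := mem_erase.1 (mem_coe.1 hs)
    have hne : (S.filter (· < s)).Nonempty :=
      ⟨S.min' hS, mem_filter.2 ⟨min'_mem S hS, (min'_le S s hs).lt_of_ne (Ne.symm hs0)⟩⟩
    obtain ⟨hpS, hps⟩ := mem_filter.1 (max'_mem _ hne)
    refine ⟨(S.filter (· < s)).max' hne,
      mem_erase.2 ⟨(hps.trans_le (le_max' S s hs)).ne, hpS⟩, ?_⟩
    refine (succIn_le hs hps).antisymm (not_lt.1 fun hlt => ?_)
    have hgt : ∃ t ∈ S, (S.filter (· < s)).max' hne < t := ⟨s, hs, hps⟩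
    exact (le_max' _ _ (mem_filter.2 ⟨succIn_mem hgt, hlt⟩)).not_gt (lt_succIn hgt)

lemma sum_erase_max'_sub_succIn {G : Type*} [AddCommGroup G] (hS : S.Nonempty) (g : α → G) :
    ∑ r ∈ S.erase (S.max' hS), (g r - g (succIn S r)) = g (S.min' hS) - g (S.max' hS) := by
  rw [sum_sub_distrib, sum_erase_max'_succIn, sum_erase_eq_sub (max'_mem S hS),
    sum_erase_eq_sub (min'_mem S hS)]
  abel

lemma sum_erase_max'_mul_succIn_sub {R : Type*} [CommRing R] (hS : S.Nonempty) (f g : α → R) :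
    ∑ r ∈ S.erase (S.max' hS), f (succIn S r) * (g (succIn S r) - g r) =
      f (S.max' hS) * g (S.max' hS) - f (succIn S (S.min' hS)) * g (S.min' hS) +
        ∑ s ∈ S.erase (S.min' hS), (f s - f (succIn S s)) * g s := by
  have htop : succIn S (S.max' hS) = S.max' hS := succIn_of_forall_le fun s hs => le_max' S s hs
  simp only [mul_sub, sub_mul, sum_sub_distrib]
  rw [sum_erase_max'_succIn hS fun s => f s * g s, sum_erase_eq_sub (max'_mem S hS),
    sum_erase_eq_sub (min'_mem S hS), sum_erase_eq_sub (min'_mem S hS), htop]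
  ring

end SuccIn

structure IsUltrametric {X : Type*} (d : X → X → ℝ) : Prop where
  eq_zero_iff : ∀ x y, d x y = 0 ↔ x = y
  symm : ∀ x y, d x y = d y x
  le_max : ∀ x y z, d x z ≤ max (d x y) (d y z)

namespace IsUltrametric

variable {X : Type*} {d : X → X → ℝ} {x y j : X} {r : ℝ}

lemma dist_self (hd : IsUltrametric d) (x : X) : d x x = 0 := (hd.eq_zero_iff x x).2 rfl

lemma dist_nonneg (hd : IsUltrametric d) (x y : X) : 0 ≤ d x y := by
  have h := hd.le_max x y x
  rwa [hd.dist_self, hd.symm y x, max_self] at h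

lemma dist_pos (hd : IsUltrametric d) (h : x ≠ y) : 0 < d x y :=
  (hd.dist_nonneg x y).lt_of_ne fun h0 => h ((hd.eq_zero_iff x y).1 h0.symm)

lemma dist_eq_of_lt_of_le (hd : IsUltrametric d) (hx : r < d j x) (hy : d j y ≤ r) :
    d x y = d j x := by
  refine le_antisymm ?_ ?_
  · calc d x y ≤ max (d x j) (d j y) := hd.le_max x j y
      _ = d j x := by rw [hd.symm x j, max_eq_left (hy.trans hx.le)]
  · have h := hd.le_max j y x
    rw [hd.symm y x] at h
    exact (le_max_iff.1 h).resolve_left fun h' => (h'.trans hy).not_gt hx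

lemma uball_eq_of_mem [Fintype X] (hd : IsUltrametric d) (h : y ∈ uball d x r) :
    uball d y r = uball d x r := by
  have hxy : d x y ≤ r := (mem_filter.1 h).2
  ext z
  simp only [uball, mem_filter, mem_univ, true_and]
  constructor
  · exact fun hz => (hd.le_max x y z).trans (max_le hxy hz)
  · exact fun hz => (hd.le_max y x z).trans (max_le (hd.symm y x ▸ hxy) hz)

end IsUltrametric

section Balls

variable {X : Type*} [Fintype X] {d : X → X → ℝ} {x y i j : X} {r s : ℝ}

lemma mem_uball : y ∈ uball d x r ↔ d x y ≤ r := by simp [uball]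

lemma uball_mono (h : r ≤ s) : uball d x r ⊆ uball d x s := fun _ hy =>
  mem_uball.2 ((mem_uball.1 hy).trans h)

lemma IsUltrametric.mem_uball_self (hd : IsUltrametric d) (hr : 0 ≤ r) : x ∈ uball d x r :=
  mem_uball.2 ((hd.dist_self x).trans_le hr)

noncomputable def radii (d : X → X → ℝ) (j : X) : Finset ℝ := univ.image (d j)

lemma mem_radii : r ∈ radii d j ↔ ∃ y, d j y = r := by simp [radii]

lemma dist_mem_radii (j y : X) : d j y ∈ radii d j := mem_radii.2 ⟨y, rfl⟩

lemma radii_nonempty (d : X → X → ℝ) (j : X) : (radii d j).Nonempty := ⟨_, dist_mem_radii j j⟩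

lemma IsUltrametric.nonneg_of_mem_radii (hd : IsUltrametric d) (hr : r ∈ radii d j) : 0 ≤ r := by
  obtain ⟨y, rfl⟩ := mem_radii.1 hr
  exact hd.dist_nonneg j y

lemma IsUltrametric.min'_radii (hd : IsUltrametric d) :
    (radii d j).min' (radii_nonempty d j) = 0 :=
  ((min'_le _ _ (dist_mem_radii j j)).trans_eq (hd.dist_self j)).antisymm
    (le_min' _ _ _ fun _ => hd.nonneg_of_mem_radii)

lemma uball_max'_radii : uball d j ((radii d j).max' (radii_nonempty d j)) = univ :=
  eq_univ_of_forall fun y => mem_uball.2 (le_max' _ _ (dist_mem_radii j y))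

lemma IsUltrametric.uball_zero (hd : IsUltrametric d) : uball d j 0 = {j} := by
  ext y
  rw [mem_uball, mem_singleton]
  refine ⟨fun h => ((hd.eq_zero_iff j y).1 (h.antisymm (hd.dist_nonneg j y))).symm, ?_⟩
  rintro rfl
  exact (hd.dist_self y).le

lemma IsUltrametric.fdiam_uball (hd : IsUltrametric d) (hs : s ∈ radii d j) :
    fdiam d (uball d j s) = s := by
  obtain ⟨y, rfl⟩ := mem_radii.1 hs
  have hj : j ∈ uball d j (d j y) := hd.mem_uball_self (hd.dist_nonneg j y)
  have hne : (uball d j (d j y) ×ˢ uball d j (d j y)).Nonempty := ⟨(j, j), mem_product.2 ⟨hj, hj⟩⟩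
  rw [fdiam, dif_pos hne]
  have hjy : (j, y) ∈ uball d j (d j y) ×ˢ uball d j (d j y) :=
    mem_product.2 ⟨hj, mem_uball.2 le_rfl⟩
  refine le_antisymm (sup'_le _ _ fun p hp => ?_) (le_sup'_of_le _ hjy le_rfl)
  obtain ⟨ha, hb⟩ := mem_product.1 hp
  rw [mem_uball] at ha hb
  calc d p.1 p.2 ≤ max (d p.1 j) (d j p.2) := hd.le_max _ _ _
    _ ≤ d j y := max_le (by rwa [hd.symm]) hb

lemma uball_subset_uball_iff (hr : r ∈ radii d j) : uball d j r ⊆ uball d j s ↔ r ≤ s := by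
  refine ⟨fun h => ?_, uball_mono⟩
  obtain ⟨y, rfl⟩ := mem_radii.1 hr
  exact mem_uball.1 (h (mem_uball.2 le_rfl))

lemma uball_ssubset_uball_iff (hr : r ∈ radii d j) (hs : s ∈ radii d j) :
    uball d j r ⊂ uball d j s ↔ r < s := by
  rw [ssubset_def, uball_subset_uball_iff hr, uball_subset_uball_iff hs, not_le]
  exact and_iff_right_of_imp le_of_lt

lemma IsUltrametric.exists_mem_radii_eq_uball (hd : IsUltrametric d) {T : Finset X}
    (hT : IsBall d T) (hj : j ∈ T) : ∃ s ∈ radii d j, T = uball d j s := by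
  obtain ⟨x, r, hr, rfl⟩ := hT
  rw [← hd.uball_eq_of_mem hj]
  have hne : ((radii d j).filter (· ≤ r)).Nonempty :=
    ⟨d j j, mem_filter.2 ⟨dist_mem_radii j j, (hd.dist_self j).trans_le hr⟩⟩
  obtain ⟨hmem, hle⟩ := mem_filter.1 (max'_mem _ hne)
  refine ⟨_, hmem, ?_⟩
  ext z
  rw [mem_uball, mem_uball]
  exact ⟨fun hz => le_max' _ _ (mem_filter.2 ⟨dist_mem_radii j z, hz⟩), fun hz => hz.trans hle⟩

lemma inf'_compl_uball [DecidableEq X] (h : (uball d j s)ᶜ.Nonempty) :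
    (uball d j s)ᶜ.inf' h (d j) = succIn (radii d j) s := by
  have hgt : ∃ t ∈ radii d j, s < t := by
    obtain ⟨z, hz⟩ := h
    exact ⟨d j z, dist_mem_radii j z, not_le.1 (mem_uball.not.1 (mem_compl.1 hz))⟩
  refine le_antisymm ?_ (le_inf' _ _ fun z hz =>
    succIn_le (dist_mem_radii j z) (not_le.1 (mem_uball.not.1 (mem_compl.1 hz))))
  obtain ⟨y, hy⟩ := mem_radii.1 (succIn_mem hgt)
  refine hy ▸ inf'_le _ (mem_compl.2 (mem_uball.not.2 (not_le.2 ?_)))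
  exact hy ▸ lt_succIn hgt

variable [DecidableEq X]

lemma parentB_uball (h : (uball d j s)ᶜ.Nonempty) :
    parentB d (uball d j s) j = uball d j (succIn (radii d j) s) := by
  rw [parentB, parentR, dif_pos h, ← inf'_compl_uball h]

lemma IsUltrametric.sball_self (hd : IsUltrametric d) (hi : i ≠ j) :
    sball d j j = uball d j (succIn (radii d j) 0) := by
  have hcompl : ({j}ᶜ : Finset X) = (uball d j 0)ᶜ := by rw [hd.uball_zero]
  have hne : ({j}ᶜ : Finset X).Nonempty := ⟨i, by simpa using hi⟩
  rw [sball, if_pos rfl, dif_pos hne, ← inf'_compl_uball (hcompl ▸ hne)]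
  congr 1
  exact inf'_congr hne hcompl fun _ _ => rfl

lemma IsUltrametric.filter_isBall_eq_image (hd : IsUltrametric d) (hij : i ≠ j) :
    univ.filter (fun T : Finset X => IsBall d T ∧ sball d j j ⊆ T ∧ T ⊂ uball d i (d i j)) =
      ((radii d j).filter fun s => 0 < s ∧ s < d j i).image (uball d j) := by
  have hi : uball d i (d i j) = uball d j (d j i) := by
    rw [← hd.uball_eq_of_mem (mem_uball.2 le_rfl), hd.symm i j]
  have hgt : ∃ t ∈ radii d j, 0 < t := ⟨d j i, dist_mem_radii j i, hd.dist_pos hij.symm⟩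
  have hsucc := succIn_mem hgt
  ext T
  simp only [mem_filter, mem_univ, true_and, mem_image, hd.sball_self hij, hi]
  constructor
  · rintro ⟨hT, hsub, hlt⟩
    obtain ⟨s, hs, rfl⟩ :=
      hd.exists_mem_radii_eq_uball hT (hsub (hd.mem_uball_self (lt_succIn hgt).le))
    exact ⟨s, ⟨hs, (lt_succIn hgt).trans_le ((uball_subset_uball_iff hsucc).1 hsub),
      (uball_ssubset_uball_iff hs (dist_mem_radii j i)).1 hlt⟩, rfl⟩
  · rintro ⟨s, ⟨hs, hs0, hsi⟩, rfl⟩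
    exact ⟨⟨j, s, hs0.le, rfl⟩, (uball_subset_uball_iff hsucc).2 (succIn_le hs hs0),
      (uball_ssubset_uball_iff hs (dist_mem_radii j i)).2 hsi⟩

end Balls

section Laplacian

open scoped Matrix

variable {X : Type*} [Fintype X] {d : X → X → ℝ} {k : ℝ → ℝ} {m : X → ℝ} {i j x : X} {r s : ℝ}

lemma IsUltrametric.mass_uball_pos (hd : IsUltrametric d) (hm : ∀ x, 0 < m x) (hs : 0 ≤ s) :
    0 < mass m (uball d j s) :=
  sum_pos (fun x _ => hm x) ⟨j, hd.mem_uball_self hs⟩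

noncomputable def ballDensity (d : X → X → ℝ) (m : X → ℝ) (j : X) (s : ℝ) : X → ℝ :=
  fun x => if d j x ≤ s then (mass m (uball d j s))⁻¹ else 0

lemma ballDensity_max'_radii :
    ballDensity d m j ((radii d j).max' (radii_nonempty d j)) = fun _ => (mass m univ)⁻¹ := by
  funext x
  rw [ballDensity, if_pos (le_max' _ _ (dist_mem_radii j x)), uball_max'_radii]

lemma IsUltrametric.ballDensity_apply_sub (hd : IsUltrametric d) (hs : 0 ≤ s) :
    ballDensity d m j s j - ballDensity d m j s i =
      if s < d j i then (mass m (uball d j s))⁻¹ else 0 := by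
  simp only [ballDensity, hd.dist_self, hs, if_true]
  split_ifs <;> first | (exfalso; linarith) | simp

variable [DecidableEq X]

lemma ultraLap_sum_row_of_mem {B : Finset X} (hx : x ∈ B) :
    ∑ y ∈ B, ultraLap d k m x y = -∑ z ∈ Bᶜ, k (d x z) * m z := by
  have hcompl (C : Finset X) :
      ∑ z ∈ Cᶜ, k (d x z) * m z = ∑ z, k (d x z) * m z - ∑ z ∈ C, k (d x z) * m z :=
    eq_sub_of_add_eq (sum_compl_add_sum C _)
  have hdiag : ultraLap d k m x x = -∑ z ∈ ({x}ᶜ : Finset X), k (d x z) * m z := if_pos rfl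
  have hoff : ∀ y ∈ B.erase x, ultraLap d k m x y = k (d x y) * m y := fun y hy =>
    if_neg (ne_of_mem_erase hy)
  rw [← add_sum_erase _ _ hx, sum_congr rfl hoff, hdiag, hcompl, hcompl, sum_singleton,
    sum_erase_eq_sub hx]
  ring

lemma ultraLap_mulVec_const (c : ℝ) : ultraLap d k m *ᵥ (fun _ => c) = 0 := by
  funext x
  simp only [Matrix.mulVec, dotProduct, ← sum_mul, ultraLap_sum_row_of_mem (mem_univ x),
    compl_univ, sum_empty, neg_zero, zero_mul, Pi.zero_apply]

lemma IsUltrametric.ballDensity_zero (hd : IsUltrametric d) :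
    ballDensity d m j 0 = Pi.single j (m j)⁻¹ := by
  funext x
  by_cases hx : x = j
  · subst hx
    simp [ballDensity, hd.dist_self, hd.uball_zero, mass]
  · have hx' : ¬d j x ≤ 0 := fun h => hx (mem_singleton.1 (hd.uball_zero ▸ mem_uball.2 h))
    simp [ballDensity, hx, hx']

lemma IsUltrametric.ultraLap_mulVec_ballDensity (hd : IsUltrametric d) (hm : ∀ x, 0 < m x)
    (hs : s ∈ radii d j) :
    ultraLap d k m *ᵥ ballDensity d m j s =
      lamB d k m (uball d j s) j • ballDensity d m j s + fun x => k (max s (d j x)) := by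
  obtain ⟨y₀, rfl⟩ := mem_radii.1 hs
  have haM : (mass m (uball d j (d j y₀)))⁻¹ * mass m (uball d j (d j y₀)) = 1 :=
    inv_mul_cancel₀ (hd.mass_uball_pos hm (hd.dist_nonneg j y₀)).ne'
  funext x
  have hrow : (ultraLap d k m *ᵥ ballDensity d m j (d j y₀)) x =
      (mass m (uball d j (d j y₀)))⁻¹ * ∑ y ∈ uball d j (d j y₀), ultraLap d k m x y := by
    simp only [Matrix.mulVec, dotProduct, ballDensity, mul_ite, mul_zero]
    rw [← sum_filter, mul_sum]
    exact sum_congr rfl fun _ _ => mul_comm _ _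
  rw [hrow, Pi.add_apply, Pi.smul_apply, smul_eq_mul, lamB, hd.fdiam_uball hs, ballDensity]
  by_cases hx : d j x ≤ d j y₀
  · have hout : ∑ z ∈ (uball d j (d j y₀))ᶜ, k (d x z) * m z =
        ∑ z ∈ (uball d j (d j y₀))ᶜ, k (d j z) * m z := sum_congr rfl fun z hz => by
      rw [hd.symm x z, hd.dist_eq_of_lt_of_le (not_le.1 (mem_uball.not.1 (mem_compl.1 hz))) hx]
    rw [ultraLap_sum_row_of_mem (mem_uball.2 hx), hout, if_pos hx, max_eq_left hx]
    linear_combination k (d j y₀) * haM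
  · have hin : ∑ y ∈ uball d j (d j y₀), ultraLap d k m x y =
        k (d j x) * mass m (uball d j (d j y₀)) := by
      rw [mass, mul_sum]
      refine sum_congr rfl fun y hy => ?_
      have hyx : y ≠ x := by rintro rfl; exact hx (mem_uball.1 hy)
      rw [ultraLap, if_neg hyx, hd.dist_eq_of_lt_of_le (not_le.1 hx) (mem_uball.1 hy)]
    rw [hin, if_neg hx, max_eq_right (not_le.1 hx).le]
    linear_combination k (d j x) * haM

lemma IsUltrametric.lamB_uball_sub_lamB_succIn (hd : IsUltrametric d) (hr : r ∈ radii d j)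
    (hgt : ∃ t ∈ radii d j, r < t) :
    lamB d k m (uball d j r) j - lamB d k m (uball d j (succIn (radii d j) r)) j =
      (k (succIn (radii d j) r) - k r) * mass m (uball d j r) := by
  set r' := succIn (radii d j) r
  have hsub : (uball d j r')ᶜ ⊆ (uball d j r)ᶜ :=
    compl_subset_compl.2 (uball_mono (lt_succIn hgt).le)
  have hshell : ∀ z ∈ (uball d j r)ᶜ \ (uball d j r')ᶜ, k (d j z) * m z = k r' * m z := by
    intro z hz
    obtain ⟨hzr, hzr'⟩ := mem_sdiff.1 hz
    have hlt : r < d j z := not_le.1 (mem_uball.not.1 (mem_compl.1 hzr))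
    rw [mem_uball.1 (not_not.1 (mem_compl.not.1 hzr'))
      |>.antisymm (succIn_le (dist_mem_radii j z) hlt)]
  have hout := sum_sdiff hsub (f := fun z => k (d j z) * m z)
  rw [sum_congr rfl hshell, ← mul_sum] at hout
  have hmass := sum_sdiff hsub (f := m)
  have htot (t : ℝ) := sum_compl_add_sum (uball d j t) m
  rw [lamB, lamB, hd.fdiam_uball hr, hd.fdiam_uball (succIn_mem hgt), mass, mass]
  linear_combination hout + k r' * (htot r' - htot r - hmass)

lemma IsUltrametric.ultraLap_mulVec_ballDensity_sub_succIn (hd : IsUltrametric d)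
    (hm : ∀ x, 0 < m x) (hr : r ∈ radii d j) (hgt : ∃ t ∈ radii d j, r < t) :
    ultraLap d k m *ᵥ (ballDensity d m j r - ballDensity d m j (succIn (radii d j) r)) =
      lamB d k m (uball d j (succIn (radii d j) r)) j •
        (ballDensity d m j r - ballDensity d m j (succIn (radii d j) r)) := by
  have hdiff := hd.lamB_uball_sub_lamB_succIn (k := k) (m := m) hr hgt
  have haM : (mass m (uball d j r))⁻¹ * mass m (uball d j r) = 1 :=
    inv_mul_cancel₀ (hd.mass_uball_pos hm (hd.nonneg_of_mem_radii hr)).ne'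
  rw [Matrix.mulVec_sub, hd.ultraLap_mulVec_ballDensity hm hr,
    hd.ultraLap_mulVec_ballDensity hm (succIn_mem hgt)]
  funext x
  simp only [Pi.sub_apply, Pi.add_apply, Pi.smul_apply, smul_eq_mul]
  by_cases hx : d j x ≤ r
  · rw [max_eq_left hx, max_eq_left (hx.trans (lt_succIn hgt).le)]
    have hu : ballDensity d m j r x = (mass m (uball d j r))⁻¹ := if_pos hx
    rw [hu]
    linear_combination (mass m (uball d j r))⁻¹ * hdiff + (k (succIn (radii d j) r) - k r) * haM
  · have hle : succIn (radii d j) r ≤ d j x := succIn_le (dist_mem_radii j x) (not_le.1 hx)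
    have hu : ballDensity d m j r x = 0 := if_neg hx
    rw [max_eq_right (not_le.1 hx).le, max_eq_right hle, hu]
    ring

lemma IsUltrametric.lamB_uball_neg (hd : IsUltrametric d) (hm : ∀ x, 0 < m x)
    (hk : ∀ a b, 0 ≤ a → a ≤ b → k b ≤ k a) (hgap : 0 < k (fdiam d univ))
    (hs : s ∈ radii d j) : lamB d k m (uball d j s) j < 0 := by
  have hk_pos : ∀ t ∈ radii d j, 0 < k t := by
    intro t ht
    obtain ⟨y, rfl⟩ := mem_radii.1 ht
    have hne : (univ ×ˢ univ : Finset (X × X)).Nonempty := ⟨(j, y), mem_univ _⟩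
    have hdiam : d j y ≤ fdiam d univ := by
      rw [fdiam, dif_pos hne]
      exact le_sup'_of_le (fun p : X × X => d p.1 p.2) (mem_univ (j, y)) le_rfl
    exact hgap.trans_le (hk _ _ (hd.dist_nonneg j y) hdiam)
  have hout : 0 ≤ ∑ y ∈ (uball d j s)ᶜ, k (d j y) * m y :=
    sum_nonneg fun y _ => mul_nonneg (hk_pos _ (dist_mem_radii j y)).le (hm y).le
  have hball : 0 < k s * mass m (uball d j s) := mul_pos (hk_pos s hs)
    (hd.mass_uball_pos hm (hd.nonneg_of_mem_radii hs))
  rw [lamB, hd.fdiam_uball hs]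
  linarith

end Laplacian

open scoped Matrix in
theorem Matrix.exp_mulVec_of_mulVec_eq_smul {n : Type*} [Fintype n] [DecidableEq n]
    {A : Matrix n n ℝ} {v : n → ℝ} {c : ℝ} (h : A *ᵥ v = c • v) :
    NormedSpace.exp A *ᵥ v = Real.exp c • v := by
  -- `NormedSpace.exp` only depends on the topology; the series lemma needs some algebra norm.
  let _ : NormedRing (Matrix n n ℝ) := Matrix.linftyOpNormedRing
  let _ : NormedAlgebra ℝ (Matrix n n ℝ) := Matrix.linftyOpNormedAlgebra
  have hpow (N : ℕ) : A ^ N *ᵥ v = c ^ N • v := by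
    induction N with
    | zero => simp
    | succ N ih => rw [pow_succ, ← Matrix.mulVec_mulVec, h, Matrix.mulVec_smul, ih, smul_smul,
        pow_succ']
  have hA := (NormedSpace.exp_series_hasSum_exp' (𝕂 := ℝ) A).map
    (Matrix.mulVec.addMonoidHomLeft v) (continuous_id.matrix_mulVec continuous_const)
  have hc := (NormedSpace.exp_series_hasSum_exp' (𝕂 := ℝ) c).smul_const v
  rw [← Real.exp_eq_exp_ℝ] at hc
  refine hA.unique (hc.congr_fun fun N => ?_)
  simp [Matrix.mulVec.addMonoidHomLeft, Matrix.smul_mulVec, hpow, smul_smul]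

section Spectral

open scoped Matrix

variable {X : Type*} [Fintype X] [DecidableEq X] {d : X → X → ℝ} {k : ℝ → ℝ} {m : X → ℝ}
  {j : X}

lemma IsUltrametric.exp_smul_ultraLap_mulVec_ballDensity_zero (hd : IsUltrametric d)
    (hm : ∀ x, 0 < m x) (t : ℝ) :
    NormedSpace.exp (t • ultraLap d k m) *ᵥ ballDensity d m j 0 =
      ∑ r ∈ (radii d j).erase ((radii d j).max' (radii_nonempty d j)),
        Real.exp (lamB d k m (uball d j (succIn (radii d j) r)) j * t) •
          (ballDensity d m j r - ballDensity d m j (succIn (radii d j) r)) +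
      fun _ => (mass m univ)⁻¹ := by
  have htel := sum_erase_max'_sub_succIn (radii_nonempty d j) (ballDensity d m j)
  rw [hd.min'_radii, ballDensity_max'_radii] at htel
  rw [← sub_add_cancel (ballDensity d m j 0) fun _ => (mass m univ)⁻¹, ← htel,
    Matrix.mulVec_add, Matrix.mulVec_sum]
  congr 1
  · refine sum_congr rfl fun r hr => Matrix.exp_mulVec_of_mulVec_eq_smul ?_
    rw [Matrix.smul_mulVec, hd.ultraLap_mulVec_ballDensity_sub_succIn hm (mem_of_mem_erase hr)
      (exists_gt_of_mem_erase_max' hr), smul_smul, mul_comm]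
  · have h : (t • ultraLap d k m) *ᵥ (fun _ => (mass m univ)⁻¹) =
        (0 : ℝ) • fun _ => (mass m univ)⁻¹ := by
      rw [Matrix.smul_mulVec, ultraLap_mulVec_const, smul_zero, zero_smul]
    rw [Matrix.exp_mulVec_of_mulVec_eq_smul h, Real.exp_zero, one_smul]

lemma IsUltrametric.exp_smul_ultraLap_div_sub (hd : IsUltrametric d) (hm : ∀ x, 0 < m x)
    (t : ℝ) (i : X) :
    NormedSpace.exp (t • ultraLap d k m) j j / m j -
        NormedSpace.exp (t • ultraLap d k m) i j / m j =
      ∑ r ∈ (radii d j).erase ((radii d j).max' (radii_nonempty d j)),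
        Real.exp (lamB d k m (uball d j (succIn (radii d j) r)) j * t) *
          ((ballDensity d m j r j - ballDensity d m j r i) -
            (ballDensity d m j (succIn (radii d j) r) j -
              ballDensity d m j (succIn (radii d j) r) i)) := by
  have hcol (x : X) : NormedSpace.exp (t • ultraLap d k m) x j / m j =
      (NormedSpace.exp (t • ultraLap d k m) *ᵥ ballDensity d m j 0) x := by
    rw [hd.ballDensity_zero, Matrix.mulVec_single]
    simp [div_eq_mul_inv]
  rw [hcol, hcol, hd.exp_smul_ultraLap_mulVec_ballDensity_zero hm]
  simp only [Pi.add_apply, Finset.sum_apply, Pi.smul_apply, Pi.sub_apply, smul_eq_mul,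
    add_sub_add_right_eq_sub, ← sum_sub_distrib]
  exact sum_congr rfl fun _ _ => by ring

end Spectral

lemma integral_Ioi_sum_exp_mul {ι : Type*} (S : Finset ι) {c : ι → ℝ} (hc : ∀ r ∈ S, c r < 0)
    (b : ι → ℝ) :
    IntegrableOn (fun t => ∑ r ∈ S, Real.exp (c r * t) * b r) (Set.Ioi 0) ∧
      ∫ t in Set.Ioi 0, ∑ r ∈ S, Real.exp (c r * t) * b r = ∑ r ∈ S, -(c r)⁻¹ * b r := by
  have hint (r : ι) (hr : r ∈ S) :
      IntegrableOn (fun t => Real.exp (c r * t) * b r) (Set.Ioi 0) :=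
    (integrableOn_exp_mul_Ioi (hc r hr) 0).mul_const (b r)
  refine ⟨integrable_finsetSum S hint, ?_⟩
  rw [integral_finsetSum S hint]
  refine sum_congr rfl fun r hr => ?_
  rw [integral_mul_const, integral_exp_mul_Ioi (hc r hr), mul_zero, Real.exp_zero, neg_div,
    one_div]

lemma IsUltrametric.sum_isBall_between {X : Type*} [Fintype X] [DecidableEq X]
    {d : X → X → ℝ} (hd : IsUltrametric d) (k : ℝ → ℝ) (m : X → ℝ) {i j : X} (hij : i ≠ j) :
    ∑ T ∈ univ.filter
        (fun T : Finset X => IsBall d T ∧ sball d j j ⊆ T ∧ T ⊂ uball d i (d i j)),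
        (mass m T)⁻¹ * ((lamB d k m T j)⁻¹ - (lamB d k m (parentB d T j) j)⁻¹) =
      ∑ s ∈ (radii d j).erase 0,
        ((lamB d k m (uball d j s) j)⁻¹ - (lamB d k m (uball d j (succIn (radii d j) s)) j)⁻¹) *
          (ballDensity d m j s j - ballDensity d m j s i) := by
  have hinj : Set.InjOn (uball d j) ((radii d j).filter fun s => 0 < s ∧ s < d j i) :=
    fun r hr s hs h => ((uball_subset_uball_iff (mem_filter.1 hr).1).1 h.le).antisymm
      ((uball_subset_uball_iff (mem_filter.1 hs).1).1 h.ge)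
  have hsub : (radii d j).filter (fun s => 0 < s ∧ s < d j i) ⊆ (radii d j).erase 0 :=
    fun s hs => mem_erase.2 ⟨(mem_filter.1 hs).2.1.ne', (mem_filter.1 hs).1⟩
  rw [hd.filter_isBall_eq_image hij, sum_image hinj]
  symm
  refine (sum_subset hsub fun s hs hns => ?_).symm.trans (sum_congr rfl fun s hs => ?_)
  · obtain ⟨hs0, hs⟩ := mem_erase.1 hs
    have hpos := (hd.nonneg_of_mem_radii hs).lt_of_ne (Ne.symm hs0)
    have hsi : ¬s < d j i := fun h => hns (mem_filter.2 ⟨hs, hpos, h⟩)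
    rw [hd.ballDensity_apply_sub hpos.le, if_neg hsi, mul_zero]
  · obtain ⟨-, hs0, hsi⟩ := mem_filter.1 hs
    have hne : (uball d j s)ᶜ.Nonempty := ⟨i, mem_compl.2 (mem_uball.not.2 (not_le.2 hsi))⟩
    rw [parentB_uball hne, hd.ballDensity_apply_sub hs0.le, if_pos hsi, mul_comm]

theorem stmt19_general {X : Type*} [Fintype X] [DecidableEq X]
    (d : X → X → ℝ)
    (hd0 : ∀ x y, d x y = 0 ↔ x = y)
    (hsymm : ∀ x y, d x y = d y x)
    (hultra : ∀ x y z, d x z ≤ max (d x y) (d y z))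
    (m : X → ℝ) (hm : ∀ x, 0 < m x) (k : ℝ → ℝ)
    (hk : ∀ a b, 0 ≤ a → a ≤ b → k b ≤ k a)
    (hgap : 0 < k (fdiam d Finset.univ))
    (i j : X) (hij : i ≠ j) :
    MeasureTheory.IntegrableOn
      (fun t : ℝ =>
        (NormedSpace.exp (t • ultraLap d k m)) j j / m j -
        (NormedSpace.exp (t • ultraLap d k m)) i j / m j)
      (Set.Ioi 0) ∧
    (∫ t in Set.Ioi (0 : ℝ),
        ((NormedSpace.exp (t • ultraLap d k m)) j j / m j -
         (NormedSpace.exp (t • ultraLap d k m)) i j / m j)) =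
      (-(lamB d k m (sball d j j) j)⁻¹) * (m j)⁻¹ +
      ∑ T ∈ Finset.univ.filter
          (fun T : Finset X => IsBall d T ∧ sball d j j ⊆ T ∧ T ⊂ uball d i (d i j)),
        (mass m T)⁻¹ *
          ((lamB d k m T j)⁻¹ - (lamB d k m (parentB d T j) j)⁻¹) := by
  have hd : IsUltrametric d := ⟨hd0, hsymm, hultra⟩
  set R := radii d j
  set φ : ℝ → ℝ := fun s => ballDensity d m j s j - ballDensity d m j s i
  set h : ℝ → ℝ := fun s => (lamB d k m (uball d j s) j)⁻¹
  have hneg : ∀ r ∈ R.erase (R.max' (radii_nonempty d j)),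
      lamB d k m (uball d j (succIn R r)) j < 0 := fun r hr =>
    hd.lamB_uball_neg hm hk hgap (succIn_mem (exists_gt_of_mem_erase_max' hr))
  obtain ⟨hint, hval⟩ := integral_Ioi_sum_exp_mul _ hneg fun r => φ r - φ (succIn R r)
  simp_rw [hd.exp_smul_ultraLap_div_sub hm _ i]
  refine ⟨hint, ?_⟩
  have hbp := sum_erase_max'_mul_succIn_sub (radii_nonempty d j) h φ
  have hφtop : φ (R.max' (radii_nonempty d j)) = 0 := by
    simp only [φ]
    rw [hd.ballDensity_apply_sub (hd.nonneg_of_mem_radii (max'_mem _ _)),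
      if_neg (not_lt.2 (le_max' _ _ (dist_mem_radii j i)))]
  have hφzero : φ 0 = (m j)⁻¹ := by
    simp only [φ]
    rw [hd.ballDensity_apply_sub le_rfl, if_pos (hd.dist_pos hij.symm), hd.uball_zero, mass,
      sum_singleton]
  rw [hd.min'_radii, hφtop, hφzero] at hbp
  rw [hval, hd.sum_isBall_between k m hij, hd.sball_self hij]
  calc ∑ r ∈ R.erase (R.max' (radii_nonempty d j)),
        -(lamB d k m (uball d j (succIn R r)) j)⁻¹ * (φ r - φ (succIn R r))
      = ∑ r ∈ R.erase (R.max' (radii_nonempty d j)),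
          h (succIn R r) * (φ (succIn R r) - φ r) := sum_congr rfl fun r _ => by ring
    _ = _ := by rw [hbp]; ring

/-- Closed form for the mean first passage time `m_{ij}`:
for `i ≠ j`, `∫₀^∞ (H_t(j,j) − H_t(i,j)) dt` converges and equals
`(−1/λ(B_j⁰))·(1/m(j)) + Σ_{B_j⁰ ⊆ T ⊊ B_n} (1/m(T))·(1/λ(T) − 1/λ(T⁺))`, where
`B_n = B(i, d(i,j))` and `B_j⁰` is the smallest ball containing `j` with at least
two elements. -/
theorem stmt19 {X : Type*} [Fintype X] [DecidableEq X]
    (hX : 1 < Fintype.card X)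
    (d : X → X → ℝ)
    (hd0 : ∀ x y, d x y = 0 ↔ x = y)
    (hsymm : ∀ x y, d x y = d y x)
    (hultra : ∀ x y z, d x z ≤ max (d x y) (d y z))
    (m : X → ℝ) (hm : ∀ x, 0 < m x) (k : ℝ → ℝ)
    (hk : ∀ a b, 0 ≤ a → a ≤ b → k b ≤ k a)
    (hgap : 0 < k (fdiam d Finset.univ))
    (hprob : ∑ x, m x = 1)
    (i j : X) (hij : i ≠ j) :
    MeasureTheory.IntegrableOn
      (fun t : ℝ =>
        (NormedSpace.exp (t • ultraLap d k m)) j j / m j -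
        (NormedSpace.exp (t • ultraLap d k m)) i j / m j)
      (Set.Ioi 0) ∧
    (∫ t in Set.Ioi (0 : ℝ),
        ((NormedSpace.exp (t • ultraLap d k m)) j j / m j -
         (NormedSpace.exp (t • ultraLap d k m)) i j / m j)) =
      (-(lamB d k m (sball d j j) j)⁻¹) * (m j)⁻¹ +
      ∑ T ∈ Finset.univ.filter
          (fun T : Finset X => IsBall d T ∧ sball d j j ⊆ T ∧ T ⊂ uball d i (d i j)),
        (mass m T)⁻¹ *
          ((lamB d k m T j)⁻¹ - (lamB d k m (parentB d T j) j)⁻¹) :=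
  stmt19_general d hd0 hsymm hultra m hm k hk hgap i j hij
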